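/- arXiv:1206.3471 — 3 statements merged into one kernel-verified Lean document; each statement's English description precedes it below -/
import Mathlib

section
/- For p > 1, define h(p) = p/(p−1) + ((p+1)/(p−1))·(√(2p/(p+1)) + √(2p/(p+1) − √(2p/(p+1))) − 1/2). Then h is strictly decreasing on (1, ∞). -/
noncomputable def h (p : ℝ) : ℝ :=
  p / (p - 1) + ((p + 1) / (p - 1)) *
    (Real.sqrt (2 * p / (p + 1)) +
      Real.sqrt (2 * p / (p + 1) - Real.sqrt (2 * p / (p + 1))) - 1 / 2)

open Set

/-!
With `x = (p + 1) / (p - 1)`, which decreases from `∞` to `1` on `(1, ∞)`, one has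
`h p = 1 / 2 + √(x² + x) + √(√(x² + x) * (√(x² + x) - x))`. Both `√(x² + x)` and
`√(x² + x) - x = x / (√(x² + x) + x)` are increasing and positive for `x > 0`, so the right-hand
side increases with `x`, hence decreases with `p`.
-/

noncomputable def hReduced (x : ℝ) : ℝ :=
  √(x ^ 2 + x) + √(x ^ 2 + x - x * √(x ^ 2 + x))

lemma lt_sqrt_sq_add_self {x : ℝ} (hx : 0 < x) : x < √(x ^ 2 + x) :=
  (Real.lt_sqrt hx.le).2 (by linarith)

lemma sqrt_sq_add_self_sub_self {x : ℝ} (hx : 0 < x) :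
    √(x ^ 2 + x) - x = x / (√(x ^ 2 + x) + x) := by
  have hpos : 0 < √(x ^ 2 + x) + x := by linarith [lt_sqrt_sq_add_self hx]
  rw [eq_div_iff hpos.ne', mul_comm, ← sq_sub_sq, Real.sq_sqrt (by positivity)]
  ring

lemma sq_add_self_sub_mul_sqrt {x : ℝ} (hx : 0 ≤ x) :
    x ^ 2 + x - x * √(x ^ 2 + x) = √(x ^ 2 + x) * (√(x ^ 2 + x) - x) := by
  rw [mul_sub, ← sq, Real.sq_sqrt (by positivity)]
  ring

lemma strictMonoOn_sqrt_sq_add_self : StrictMonoOn (fun x : ℝ ↦ √(x ^ 2 + x)) (Ici 0) := by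
  rintro a (ha : 0 ≤ a) b - hab
  exact Real.sqrt_lt_sqrt (by positivity) (by nlinarith)

lemma strictMonoOn_sqrt_sq_add_self_sub_self :
    StrictMonoOn (fun x : ℝ ↦ √(x ^ 2 + x) - x) (Ioi 0) := by
  rintro a (ha : 0 < a) b (hb : 0 < b) hab
  have hcross : a * √(b ^ 2 + b) < b * √(a ^ 2 + a) := by
    refine lt_of_pow_lt_pow_left₀ 2 (by positivity) ?_
    rw [mul_pow, mul_pow, Real.sq_sqrt (by positivity), Real.sq_sqrt (by positivity)]
    nlinarith [mul_pos (mul_pos ha hb) (sub_pos.2 hab)]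
  dsimp only
  rw [sqrt_sq_add_self_sub_self ha, sqrt_sq_add_self_sub_self hb,
    div_lt_div_iff₀ (by linarith [lt_sqrt_sq_add_self ha]) (by linarith [lt_sqrt_sq_add_self hb])]
  linarith

lemma strictMonoOn_hReduced : StrictMonoOn hReduced (Ioi 0) := by
  rintro a (ha : 0 < a) b (hb : 0 < b) hab
  have hsqrt := strictMonoOn_sqrt_sq_add_self ha.le hb.le hab
  have hgap := strictMonoOn_sqrt_sq_add_self_sub_self ha hb hab
  have hgap_pos : 0 < √(a ^ 2 + a) - a := sub_pos.2 (lt_sqrt_sq_add_self ha)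
  dsimp only at hsqrt hgap
  unfold hReduced
  rw [sq_add_self_sub_mul_sqrt ha.le, sq_add_self_sub_mul_sqrt hb.le]
  gcongr

lemma add_one_div_sub_one_pos {p : ℝ} (hp : 1 < p) : 0 < (p + 1) / (p - 1) :=
  div_pos (by linarith) (by linarith)

lemma h_eq_hReduced {p : ℝ} (hp : 1 < p) : h p = 1 / 2 + hReduced ((p + 1) / (p - 1)) := by
  set x := (p + 1) / (p - 1) with hx_def
  have hx : 0 < x := add_one_div_sub_one_pos hp
  have hsq : x ^ 2 + x = x ^ 2 * (2 * p / (p + 1)) := by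
    rw [hx_def]; field_simp [show p - 1 ≠ 0 by linarith]; ring
  have hsqrt : √(x ^ 2 + x) = x * √(2 * p / (p + 1)) := by
    rw [hsq, Real.sqrt_mul (by positivity), Real.sqrt_sq hx.le]
  have hinner : x ^ 2 + x - x * √(x ^ 2 + x) = x ^ 2 * (2 * p / (p + 1) - √(2 * p / (p + 1))) := by
    rw [hsqrt, hsq]; ring
  have hconst : p / (p - 1) - x / 2 = 1 / 2 := by
    rw [hx_def]; field_simp [show p - 1 ≠ 0 by linarith]; ring
  rw [h, hReduced, ← hx_def, hinner, Real.sqrt_mul (by positivity), Real.sqrt_sq hx.le, hsqrt]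
  linarith

lemma strictAntiOn_add_one_div_sub_one :
    StrictAntiOn (fun p : ℝ ↦ (p + 1) / (p - 1)) (Ioi 1) := by
  rintro p (hp : 1 < p) q (hq : 1 < q) hpq
  dsimp only
  rw [div_lt_div_iff₀ (by linarith) (by linarith)]
  nlinarith

theorem h_strictAnti : StrictAntiOn h (Set.Ioi (1 : ℝ)) := by
  intro p hp q hq hpq
  rw [h_eq_hReduced hp, h_eq_hReduced hq]
  have := strictMonoOn_hReduced (add_one_div_sub_one_pos hq) (add_one_div_sub_one_pos hp)
    (strictAntiOn_add_one_div_sub_one hp hq hpq)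
  linarith
end

section
/- For every p > 1, one has 2p/(p−1) < h(p), where h(p) = p/(p−1) + ((p+1)/(p−1))·(√(2p/(p+1)) + √(2p/(p+1) − √(2p/(p+1))) − 1/2). -/
/-
With `s = 2p/(p+1)`, `h p - 2p/(p-1)` is `(p+1)/(p-1)` times `√s + √(s - √s) - (s+1)/2`.
Writing `t = √s`, the last factor is positive because `√(t(t-1)) > (t-1)²/2`,
i.e. `4t > (t-1)³`, which holds comfortably for `1 < t ≤ 3`.
-/

open Real

lemma sq_sub_one_div_two_lt_sqrt_mul_sub_one {t : ℝ} (ht₁ : 1 < t) (ht₃ : t ≤ 3) :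
    (t - 1) ^ 2 / 2 < √(t * (t - 1)) := by
  have hcube : (t - 1) ^ 3 < 4 * t := by nlinarith [mul_pos (sub_pos.2 ht₁) (sub_pos.2 ht₁)]
  apply Real.lt_sqrt_of_sq_lt
  nlinarith [sub_pos.2 ht₁]

lemma add_one_div_two_lt_sqrt_add_sqrt_sub_sqrt {s : ℝ} (hs₁ : 1 < s) (hs₉ : s ≤ 9) :
    (s + 1) / 2 < √s + √(s - √s) := by
  set t := √s with ht
  have hts : t ^ 2 = s := sq_sqrt (by linarith)
  have ht₁ : 1 < t := by rw [ht, lt_sqrt zero_le_one]; linarith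
  have ht₃ : t ≤ 3 := by rw [ht, sqrt_le_left (by norm_num)]; linarith
  have key := sq_sub_one_div_two_lt_sqrt_mul_sub_one ht₁ ht₃
  rw [show t * (t - 1) = s - t by rw [← hts]; ring] at key
  nlinarith

lemma h_sub_two_mul_div_sub_one {p : ℝ} (hp : p + 1 ≠ 0) :
    h p - 2 * p / (p - 1) = (p + 1) / (p - 1) *
      (√(2 * p / (p + 1)) + √(2 * p / (p + 1) - √(2 * p / (p + 1)))
        - (2 * p / (p + 1) + 1) / 2) := by
  unfold h
  field_simp
  ring

theorem h_improves (p : ℝ) (hp : 1 < p) : 2 * p / (p - 1) < h p := by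
  have hp₁ : 0 < p + 1 := by linarith
  have hs₁ : 1 < 2 * p / (p + 1) := by rw [lt_div_iff₀ hp₁]; linarith
  have hs₉ : 2 * p / (p + 1) ≤ 9 := by rw [div_le_iff₀ hp₁]; linarith
  rw [← sub_pos, h_sub_two_mul_div_sub_one hp₁.ne']
  exact mul_pos (div_pos hp₁ (by linarith))
    (sub_pos.2 (add_one_div_two_lt_sqrt_add_sqrt_sub_sqrt hs₁ hs₉))
end

section
/- For every p > 1, one has h(p) > 10/4, where h(p) = p/(p−1) + ((p+1)/(p−1))·(√(2p/(p+1)) + √(2p/(p+1) − √(2p/(p+1))) − 1/2). -/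
theorem h_gt (p : ℝ) (hp : 1 < p) : h p > 10 / 4 := by
  have hp1 : (0:ℝ) < p - 1 := by linarith
  have hp2 : (0:ℝ) < p + 1 := by linarith
  have s2 : Real.sqrt 2 ^ 2 = 2 := Real.sq_sqrt (by norm_num)
  have s2n : (0:ℝ) ≤ Real.sqrt 2 := Real.sqrt_nonneg 2
  have s2a : 1.4 < Real.sqrt 2 := by nlinarith
  have s2b : Real.sqrt 2 < 1.5 := by nlinarith
  unfold h
  set c : ℝ := 1 + Real.sqrt 2 with hc
  have hc0 : (0:ℝ) < c := by rw [hc]; linarith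
  have hinvc : 1 / c = Real.sqrt 2 - 1 := by
    rw [hc, div_eq_iff (by linarith : (0:ℝ) < 1 + Real.sqrt 2).ne']
    nlinarith
  set q : ℝ := 2 * p / (p + 1) with hq
  have hq1 : 1 < q := by rw [hq, lt_div_iff₀ hp2]; linarith
  have hq2 : q < 2 := by rw [hq, div_lt_iff₀ hp2]; linarith
  set t : ℝ := Real.sqrt q with ht
  have ht0 : 0 ≤ t := Real.sqrt_nonneg q
  have htq : t ^ 2 = q := Real.sq_sqrt (by linarith)
  have ht1 : 1 < t := by nlinarith
  have ht2 : t < Real.sqrt 2 := by nlinarith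
  have hqm1 : q - 1 = (p - 1) / (p + 1) := by
    rw [hq]; field_simp; ring
  have htm1 : (q - 1) / c ≤ t - 1 := by
    rw [div_le_iff₀ hc0]
    nlinarith [mul_nonneg (by linarith : (0:ℝ) ≤ t - 1) (by linarith : (0:ℝ) ≤ c - (t + 1))]
  have hqt : (q - 1) / c ≤ q - t := by
    nlinarith [mul_nonneg (by linarith : (0:ℝ) ≤ t - 1) (by linarith : (0:ℝ) ≤ t - 1)]
  set S : ℝ := Real.sqrt (q - t) with hS
  have hS0 : 0 ≤ S := Real.sqrt_nonneg _
  have hSB : Real.sqrt ((q - 1) / c) ≤ S := Real.sqrt_le_sqrt hqt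
  set A : ℝ := (p + 1) / (p - 1) with hA
  have hA0 : (0:ℝ) < A := div_pos hp2 hp1
  have hA1 : 1 < A := (one_lt_div hp1).mpr (by linarith)
  have hAq : A * (q - 1) = 1 := by
    rw [hqm1, hA]; field_simp
  have hB0 : (0:ℝ) ≤ (q - 1) / c := div_nonneg (by linarith) hc0.le
  have hsq : (Real.sqrt ((q - 1) / c)) ^ 2 = (q - 1) / c := Real.sq_sqrt hB0
  have hAB : A ^ 2 * ((q - 1) / c) = A * (1 / c) := by
    rw [pow_two, mul_assoc, mul_div_assoc', hAq]
  have hAS : 2 - Real.sqrt 2 ≤ A * S := by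
    have hbig : (2 - Real.sqrt 2) ^ 2 ≤ A ^ 2 * ((q - 1) / c) := by
      rw [hAB, hinvc]
      nlinarith [mul_nonneg (by linarith : (0:ℝ) ≤ A - 1) (by linarith : (0:ℝ) ≤ Real.sqrt 2 - 1)]
    have hsq2 : (A * Real.sqrt ((q - 1) / c)) ^ 2 = A ^ 2 * ((q - 1) / c) := by
      rw [mul_pow, hsq]
    have h1 : 2 - Real.sqrt 2 ≤ A * Real.sqrt ((q - 1) / c) := by
      have h0 : (2 - Real.sqrt 2) ^ 2 ≤ (A * Real.sqrt ((q - 1) / c)) ^ 2 := by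
        rw [hsq2]; exact hbig
      have h0' := Real.sqrt_le_sqrt h0
      rwa [Real.sqrt_sq (by linarith), Real.sqrt_sq
        (mul_nonneg hA0.le (Real.sqrt_nonneg ((q - 1) / c)))] at h0'
    calc 2 - Real.sqrt 2 ≤ A * Real.sqrt ((q - 1) / c) := h1
      _ ≤ A * S := mul_le_mul_of_nonneg_left hSB hA0.le
  have hAt : Real.sqrt 2 - 1 ≤ A * (t - 1) := by
    have h2 : A * ((q - 1) / c) = 1 / c := by rw [mul_div_assoc', hAq]
    have h3 : A * ((q - 1) / c) ≤ A * (t - 1) := mul_le_mul_of_nonneg_left htm1 hA0.le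
    rw [h2, hinvc] at h3; exact h3
  have hPp : 1 < p / (p - 1) := (one_lt_div hp1).mpr (by linarith)
  have expand : A * (t + S - 1 / 2) = A * (t - 1) + A * S + A / 2 := by ring
  have key : (3:ℝ) / 2 ≤ A * (t + S - 1 / 2) := by
    rw [expand]; linarith
  linarith
end
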